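/- A connected graph G on vertex set {1,...,n} has no G-active edge (with respect to the lexicographic edge order) if and only if G is an increasing tree, i.e., a tree in which vertex labels strictly increase along every simple path starting at vertex 1. -/

import Mathlib

open scoped Classical

noncomputable section

/-- The lexicographic key of the edge `{a, b}` of the complete graph on `Fin n`:
the pair `(min a b, max a b)` with the lexicographic order. -/
def edgeKey {n : ℕ} (a b : Fin n) : Fin n ×ₗ Fin n := toLex (min a b, max a b)

/-- The spanning subgraph `G^{>e}` of `G` consisting of the edges strictly greater
than `e` in the lexicographic order. -/
def aboveEdge {n : ℕ} (G : SimpleGraph (Fin n)) (e : Fin n ×ₗ Fin n) :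
    SimpleGraph (Fin n) where
  Adj a b := G.Adj a b ∧ e < edgeKey a b
  symm := ⟨by
    intro a b hab
    refine ⟨hab.1.symm, ?_⟩
    have : edgeKey a b = edgeKey b a := by
      unfold edgeKey; rw [min_comm a b, max_comm a b]
    rw [← this]; exact hab.2⟩
  loopless := ⟨fun a ha => G.loopless.irrefl a ha.1⟩

/-- An edge `e = (i, j)` of `K_n` (with `i < j`) is `G`-active if `i` and `j` are joined
by a path in `G^{>e}`. -/
def IsActive {n : ℕ} (G : SimpleGraph (Fin n)) (e : Fin n ×ₗ Fin n) : Prop :=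
  (ofLex e).1 < (ofLex e).2 ∧ (aboveEdge G e).Reachable (ofLex e).1 (ofLex e).2

instance {n : ℕ} : Fintype (Fin n ×ₗ Fin n) := Fintype.ofEquiv (Fin n × Fin n) toLex

/-- The finset of `G`-active edges. -/
def activeEdges {n : ℕ} (G : SimpleGraph (Fin n)) : Finset (Fin n ×ₗ Fin n) :=
  Finset.univ.filter (IsActive G)

/-- `G ⊕ e`: toggle the edge `e` (delete it if present, add it otherwise). -/
def toggleEdge {n : ℕ} (G : SimpleGraph (Fin n)) (e : Fin n ×ₗ Fin n) :
    SimpleGraph (Fin n) :=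
  if G.Adj (ofLex e).1 (ofLex e).2 then G.deleteEdges {s((ofLex e).1, (ofLex e).2)}
  else G ⊔ SimpleGraph.fromEdgeSet {s((ofLex e).1, (ofLex e).2)}

/-- The map `Ψ`: toggle the least `G`-active edge, if any. -/
def Psi {n : ℕ} (G : SimpleGraph (Fin n)) : SimpleGraph (Fin n) :=
  if h : (activeEdges G).Nonempty then toggleEdge G ((activeEdges G).min' h) else G

end

/-!
Both conditions are equivalent to: every vertex has at most one smaller neighbour.
If `a < b < v` are both adjacent to `v`, the path `a, v, b` lies in `G^{>(a,b)}`, so `(a,b)` is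
active. Conversely, along a path in `G^{>(i,j)}` from `i` to `j` the vertex after `i` exceeds `j`,
so the largest vertex of the path is an interior one, and its two neighbours on the path are both
smaller. The same local-maximum argument shows that a graph with at most one smaller neighbour
per vertex is acyclic and that its paths leaving the minimal vertex increase. In an increasing
tree, a smaller neighbour of `v` is the penultimate vertex of the unique path from the root to `v`.
-/

namespace SimpleGraph

variable {V : Type*} [LinearOrder V] {G : SimpleGraph V}

def LowerNeighborsSubsingleton (G : SimpleGraph V) : Prop :=
  ∀ v, (G.neighborSet v ∩ Set.Iio v).Subsingleton

namespace LowerNeighborsSubsingleton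

open Walk

theorem le_max_of_mem_support (hL : G.LowerNeighborsSubsingleton) {a b x : V} {p : G.Walk a b}
    (hp : p.IsPath) (hx : x ∈ p.support) : x ≤ max a b := by
  induction p generalizing x with
  | nil => simp_all
  | @cons a c b h q ih =>
    rw [cons_isPath_iff] at hp
    rcases List.mem_cons.mp (support_cons h q ▸ hx) with rfl | hxq
    · exact le_max_left _ _
    refine (ih hp.1 hxq).trans (max_le ?_ (le_max_right _ _))
    -- otherwise `c` would be a local maximum of the path, with two lower neighbours
    by_contra! hc
    cases q with
    | nil => exact (le_max_right a c).not_gt hc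
    | @cons _ d _ h' q' =>
      have hbc : b < c := (le_max_right a b).trans_lt hc
      have hd : d ∈ (cons h' q').support := List.mem_cons_of_mem _ q'.start_mem_support
      have hdc : d < c := lt_of_le_of_ne ((ih hp.1 hd).trans_eq (max_eq_left hbc.le)) h'.ne'
      have had : a = d := hL c ⟨h.symm, (le_max_left a b).trans_lt hc⟩ ⟨h', hdc⟩
      exact hp.2 (had ▸ hd)

theorem isBridge (hL : G.LowerNeighborsSubsingleton) {a b : V} (h : G.Adj a b) :
    G.IsBridge s(a, b) := by
  wlog hab : a < b generalizing a b
  · rw [Sym2.eq_swap]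
    exact this h.symm (lt_of_le_of_ne (not_lt.mp hab) h.ne')
  classical
  refine isBridge_iff_forall_walk_mem_edges.mpr fun p => p.edges_bypass_subset_edges ?_
  have hp := p.bypass_isPath
  have hnil : ¬p.bypass.Nil := not_nil_of_ne h.ne
  have hle : p.bypass.penultimate ≤ b :=
    (hL.le_max_of_mem_support hp (List.mem_of_mem_dropLast
      (penultimate_mem_dropLast_support hnil))).trans_eq (max_eq_right hab.le)
  have hadj := p.bypass.adj_penultimate hnil
  have hpen : p.bypass.penultimate = a :=
    hL b ⟨hadj.symm, lt_of_le_of_ne hle hadj.ne⟩ ⟨h.symm, hab⟩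
  have hmem := p.bypass.mk_penultimate_end_mem_edges hnil
  rwa [hpen] at hmem

theorem isAcyclic (hL : G.LowerNeighborsSubsingleton) : G.IsAcyclic :=
  isAcyclic_iff_forall_adj_isBridge.mpr fun _ _ => hL.isBridge

theorem isChain_support_cons (hL : G.LowerNeighborsSubsingleton) {a c b : V} (h : G.Adj a c)
    (hac : a < c) (q : G.Walk c b) (hp : (cons h q).IsPath) :
    (cons h q).support.IsChain (· < ·) := by
  induction q generalizing a with
  | nil => simpa using hac
  | @cons c d b h' q ih =>
    rw [cons_isPath_iff] at hp
    have hcd : c < d := by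
      refine lt_of_le_of_ne (not_lt.mp fun hdc => hp.2 ?_) h'.ne
      rw [hL c ⟨h.symm, hac⟩ ⟨h', hdc⟩]
      simp
    rw [support_cons, support_cons, List.isChain_cons_cons, ← support_cons h']
    exact ⟨hac, ih h' hcd hp.1⟩

theorem isChain_support (hL : G.LowerNeighborsSubsingleton) {a b : V} {p : G.Walk a b}
    (hp : p.IsPath) (ha : ∀ x ∈ p.support, a ≤ x) : p.support.IsChain (· < ·) := by
  cases p with
  | nil => simp
  | cons h q => exact hL.isChain_support_cons h (lt_of_le_of_ne (ha _ (by simp)) h.ne) q hp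

end LowerNeighborsSubsingleton

theorem IsTree.lowerNeighborsSubsingleton {r : V} (hT : G.IsTree)
    (hInc : ∀ v (p : G.Walk r v), p.IsPath → p.support.IsChain (· < ·)) :
    G.LowerNeighborsSubsingleton := by
  have penultimate_eq :
      ∀ {v a}, G.Adj a v → a < v → ∃ p : G.Path r v, p.1.penultimate = a := by
    intro v a h hav
    obtain ⟨p, hp⟩ := (hT.connected.preconnected r a).exists_isPath
    have hle : ∀ x ∈ p.support, x ≤ a := (hInc a p hp).backwards_induction (· ≤ a) _
      (fun _ _ hxy hy => hxy.le.trans hy) (fun _ => p.getLast_support.le)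
    have hv : v ∉ p.support := fun hv => (hle v hv).not_gt hav
    exact ⟨⟨p.concat h, (Walk.concat_isPath_iff h).2 ⟨hp, hv⟩⟩, p.penultimate_concat h⟩
  intro v a ⟨ha, hav⟩ b ⟨hb, hbv⟩
  obtain ⟨p, rfl⟩ := penultimate_eq ha.symm hav
  obtain ⟨q, rfl⟩ := penultimate_eq hb.symm hbv
  rw [(hT.isAcyclic.subsingleton_path r v).elim p q]

end SimpleGraph

section ActiveEdges

open SimpleGraph

variable {n : ℕ} {G : SimpleGraph (Fin n)}

theorem lt_of_toLex_lt_edgeKey {i j z : Fin n} (hiz : i ≠ z) (h : toLex (i, j) < edgeKey i z) :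
    j < z := by
  unfold edgeKey at h
  rcases hiz.lt_or_gt with hiz | hzi
  · simpa [min_eq_left hiz.le, max_eq_right hiz.le, Prod.Lex.toLex_lt_toLex] using h
  · simp only [min_eq_right hzi.le, max_eq_left hzi.le, Prod.Lex.toLex_lt_toLex] at h
    omega

theorem isActive_of_adj_of_adj {a b v : Fin n} (hab : a < b) (hbv : b < v) (ha : G.Adj a v)
    (hb : G.Adj b v) : IsActive G (toLex (a, b)) := by
  have hav : (aboveEdge G (toLex (a, b))).Adj a v := ⟨ha, by
    simp [edgeKey, min_eq_left (hab.trans hbv).le, max_eq_right (hab.trans hbv).le,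
      Prod.Lex.toLex_lt_toLex, hbv]⟩
  have hvb : (aboveEdge G (toLex (a, b))).Adj v b := ⟨hb.symm, by
    simp [edgeKey, min_eq_right hbv.le, max_eq_left hbv.le, Prod.Lex.toLex_lt_toLex, hab]⟩
  exact ⟨hab, hav.reachable.trans hvb.reachable⟩

theorem IsActive.exists_isPath_mem_support_gt {e : Fin n ×ₗ Fin n} (he : IsActive G e) :
    ∃ p : G.Walk (ofLex e).1 (ofLex e).2, p.IsPath ∧ ∃ z ∈ p.support, (ofLex e).2 < z := by
  obtain ⟨hlt, hreach⟩ := he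
  obtain ⟨p, hp⟩ := hreach.exists_isPath
  obtain ⟨z, hz, q, rfl⟩ := Walk.not_nil_iff.mp (Walk.not_nil_of_ne (p := p) hlt.ne)
  have hle : aboveEdge G e ≤ G := fun _ _ h => h.1
  exact ⟨_, (Walk.isPath_mapLe hle).mpr hp, z, by simp, lt_of_toLex_lt_edgeKey hz.ne hz.2⟩

theorem forall_not_isActive_iff :
    (∀ e, ¬ IsActive G e) ↔ G.LowerNeighborsSubsingleton := by
  refine ⟨fun hA v a ⟨ha, hav⟩ b ⟨hb, hbv⟩ => ?_, fun hL e he => ?_⟩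
  · by_contra hne
    rcases lt_or_gt_of_ne hne with hab | hba
    · exact hA _ (isActive_of_adj_of_adj hab hbv ha.symm hb.symm)
    · exact hA _ (isActive_of_adj_of_adj hba hav hb.symm ha.symm)
  · obtain ⟨p, hp, z, hz, hjz⟩ := he.exists_isPath_mem_support_gt
    exact (hL.le_max_of_mem_support hp hz).not_gt (by rwa [max_eq_right he.1.le])

end ActiveEdges

/-- A connected graph `G` on `{1, …, n}` (here `Fin n`, with vertex `0` playing the role of
the label `1`) has no `G`-active edge iff it is an increasing tree, i.e. a tree in which the
vertex labels strictly increase along every simple path starting at the first vertex. -/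
theorem no_active_iff_increasing_tree {n : ℕ} (hn : 1 ≤ n) (G : SimpleGraph (Fin n))
    (hG : G.Connected) :
    (∀ e : Fin n ×ₗ Fin n, ¬ IsActive G e) ↔
      (G.IsTree ∧ ∀ (v : Fin n) (p : G.Walk ⟨0, hn⟩ v), p.IsPath →
        List.Chain' (· < ·) p.support) := by
  rw [forall_not_isActive_iff]
  refine ⟨fun hL => ⟨⟨hG, hL.isAcyclic⟩, fun v p hp => ?_⟩,
    fun ⟨hT, hInc⟩ => hT.lowerNeighborsSubsingleton hInc⟩
  exact hL.isChain_support hp fun x _ => Fin.mk_le_of_le_val (Nat.zero_le _)
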